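/- Let G = G₁ ∧ G₂ be the intersection graph of an attributed Erdős–Rényi pair G(n,p;m,q), so that each user-user pair is an edge of G independently with probability p₁₁ and each user-attribute pair is an edge independently with probability q₁₁. For distinct user vertices i, j, k, the probability that i, j, k are pairwise indistinguishable satisfies P(i ≡ j ≡ k) = (1 − 3p₁₁ + 3p₁₁²)^{n−2} · (1 − 3q₁₁ + 3q₁₁²)^m. -/

import Mathlib

open MeasureTheory Finset

noncomputable section

/-- The set of user-user vertex pairs: unordered pairs of distinct user vertices. -/
abbrev UU (n : ℕ) : Type := {e : Sym2 (Fin n) // ¬ e.IsDiag}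

/-- The set of user-attribute vertex pairs. -/
abbrev UA (n m : ℕ) : Type := Fin n × Fin m

/-- All vertex pairs that can carry an edge. -/
abbrev Edge (n m : ℕ) : Type := UU n ⊕ UA n m

/-- Bernoulli distribution on `Bool`. -/
def bernM (p : ℝ) : Measure Bool :=
  p.toNNReal • Measure.dirac true + (1 - p).toNNReal • Measure.dirac false

/-- The distribution of the intersection graph `G₁ ∧ G₂`: user-user pairs are edges
independently with probability `p₁₁`, user-attribute pairs independently with
probability `q₁₁`. -/
def interM (n m : ℕ) (p11 q11 : ℝ) : Measure (Edge n m → Bool) :=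
  Measure.pi (fun e => Sum.elim (fun _ => bernM p11) (fun _ => bernM q11) e)

/-- The user-user vertex pair `{i, v}` for distinct user vertices. -/
def uedge {n : ℕ} (m : ℕ) (i v : Fin n) (h : i ≠ v) : Edge n m :=
  Sum.inl ⟨s(i, v), by simpa [Sym2.mk_isDiag_iff] using h⟩

/-- Two distinct user vertices `i, j` are indistinguishable in the graph `g`:
their edge indicators towards every other vertex (user or attribute) coincide. -/
def Indist {n m : ℕ} (g : Edge n m → Bool) (i j : Fin n) : Prop :=
  (∀ v : Fin n, ∀ h1 : v ≠ i, ∀ h2 : v ≠ j,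
    g (uedge m i v h1.symm) = g (uedge m j v h2.symm)) ∧
  (∀ u : Fin m, g (Sum.inr (i, u)) = g (Sum.inr (j, u)))

/-! ### Auxiliary development -/

namespace ProbTriple

lemma bernM_singleton (p : ℝ) (β : Bool) :
    bernM p {β} = ENNReal.ofReal (if β then p else 1 - p) := by
  cases β <;>
    simp [bernM, Measure.dirac_apply, ENNReal.ofReal, Measure.add_apply, Measure.smul_apply,
      ENNReal.smul_def, - Measure.coe_nnreal_smul]

lemma bernM_univ (p : ℝ) (h0 : 0 ≤ p) (h1 : p ≤ 1) : bernM p Set.univ = 1 := by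
  simp only [bernM, Measure.add_apply, Measure.smul_apply, Measure.dirac_apply,
    Set.mem_univ, Set.indicator_of_mem, Pi.one_apply, ENNReal.smul_def, smul_eq_mul, mul_one]
  rw [← ENNReal.coe_add, ← Real.toNNReal_add h0 (by linarith)]
  norm_num

lemma bernM_prob (p : ℝ) (h0 : 0 ≤ p) (h1 : p ≤ 1) : IsProbabilityMeasure (bernM p) :=
  ⟨bernM_univ p h0 h1⟩

variable {n m : ℕ}

/-- `x` is one of the three distinguished vertices. -/
def inS (i j k x : Fin n) : Prop := x = i ∨ x = j ∨ x = k

instance (i j k x : Fin n) : Decidable (inS i j k x) := by unfold inS; infer_instance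

/-- Classification of edges into independence blocks. -/
def cfun (i j k : Fin n) : Edge n m → Option (Fin n ⊕ Fin m) :=
  Sum.elim
    (fun e => Sym2.lift ⟨fun x y =>
        if inS i j k x ∧ inS i j k y then some (Sum.inl i)
        else if inS i j k x then some (Sum.inl y)
        else if inS i j k y then some (Sum.inl x)
        else none,
      by
        intro x y
        by_cases hx : inS i j k x <;> by_cases hy : inS i j k y <;>
          simp [hx, hy]⟩ e.1)
    (fun xu => if inS i j k xu.1 then some (Sum.inr xu.2) else none)

lemma cfun_uedge (i j k x v : Fin n) (h : x ≠ v) (hx : inS i j k x) :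
    cfun (m := m) i j k (uedge m x v h) =
      if inS i j k v then some (Sum.inl i) else some (Sum.inl v) := by
  by_cases hv : inS i j k v <;> simp [cfun, uedge, hx, hv]

lemma cfun_uedge_pos (i j k x v : Fin n) (hx : inS i j k x) (hv : inS i j k v)
    (h : x ≠ v) : cfun (m := m) i j k (uedge m x v h) = some (Sum.inl i) := by
  simp [cfun, uedge, hx, hv]

lemma cfun_uedge_neg (i j k x v : Fin n) (hx : inS i j k x) (hv : ¬ inS i j k v)
    (h : x ≠ v) : cfun (m := m) i j k (uedge m x v h) = some (Sum.inl v) := by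
  simp [cfun, uedge, hx, hv]

lemma cfun_inr (i j k x : Fin n) (u : Fin m) (hx : inS i j k x) :
    cfun (m := m) i j k (Sum.inr (x, u)) = some (Sum.inr u) := by
  simp [cfun, hx]

/-- The only user labels in the range of `cfun` are `i` and vertices outside `{i,j,k}`. -/
lemma cfun_inl_cases (i j k : Fin n) (e : Edge n m) (y : Fin n)
    (h : cfun i j k e = some (Sum.inl y)) : y = i ∨ ¬ inS i j k y := by
  rcases e with ⟨z, hz⟩ | ⟨x, u⟩
  · induction z using Sym2.inductionOn with
    | hf x y' =>
      simp only [cfun, Sum.elim_inl, Sym2.lift_mk] at h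
      split_ifs at h with h1 h2 h3
      · simp only [Option.some.injEq, Sum.inl.injEq] at h
        exact Or.inl h.symm
      · simp only [Option.some.injEq, Sum.inl.injEq] at h
        subst h
        right
        intro hy
        exact h1 ⟨h2, hy⟩
      · simp only [Option.some.injEq, Sum.inl.injEq] at h
        subst h
        exact Or.inr h2
  · simp only [cfun, Sum.elim_inr] at h
    split_ifs at h <;> simp at h

section Fibers

variable (i j k : Fin n) (hij : i ≠ j) (hjk : j ≠ k) (hik : i ≠ k)

lemma fiber_tri (e : Edge n m) :
    cfun i j k e = some (Sum.inl i) ↔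
      e = uedge m i j hij ∨ e = uedge m j k hjk ∨ e = uedge m i k hik := by
  constructor
  · intro h
    rcases e with ⟨z, hz⟩ | ⟨x, u⟩
    · induction z using Sym2.inductionOn with
      | hf x y =>
        have hxy : x ≠ y := by simpa [Sym2.mk_isDiag_iff] using hz
        simp only [cfun, Sum.elim_inl, Sym2.lift_mk] at h
        split_ifs at h with h1 h2 h3
        · obtain ⟨hx, hy⟩ := h1
          rcases hx with rfl | rfl | rfl <;> rcases hy with rfl | rfl | rfl <;>
            simp_all [uedge, Subtype.ext_iff, Sym2.eq_swap] <;> tauto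
        · simp only [Option.some.injEq, Sum.inl.injEq] at h
          subst h
          exact absurd ⟨h2, Or.inl rfl⟩ h1
        · simp only [Option.some.injEq, Sum.inl.injEq] at h
          subst h
          exact absurd (Or.inl rfl) h2
    · simp only [cfun, Sum.elim_inr] at h
      split_ifs at h <;> simp at h
  · rintro (rfl | rfl | rfl)
    · exact cfun_uedge_pos i j k i j (Or.inl rfl) (Or.inr (Or.inl rfl)) hij
    · exact cfun_uedge_pos i j k j k (Or.inr (Or.inl rfl)) (Or.inr (Or.inr rfl)) hjk
    · exact cfun_uedge_pos i j k i k (Or.inl rfl) (Or.inr (Or.inr rfl)) hik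

lemma fiber_v (v : Fin n) (hv : ¬ inS i j k v)
    (hiv : i ≠ v) (hjv : j ≠ v) (hkv : k ≠ v) (e : Edge n m) :
    cfun i j k e = some (Sum.inl v) ↔
      e = uedge m i v hiv ∨ e = uedge m j v hjv ∨ e = uedge m k v hkv := by
  constructor
  · intro h
    rcases e with ⟨z, hz⟩ | ⟨x, u⟩
    · induction z using Sym2.inductionOn with
      | hf x y =>
        simp only [cfun, Sum.elim_inl, Sym2.lift_mk] at h
        split_ifs at h with h1 h2 h3
        · simp only [Option.some.injEq, Sum.inl.injEq] at h
          exact absurd (h ▸ Or.inl rfl : inS i j k v) hv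
        · simp only [Option.some.injEq, Sum.inl.injEq] at h
          subst h
          rcases h2 with rfl | rfl | rfl <;>
            simp [uedge, Subtype.ext_iff]
        · simp only [Option.some.injEq, Sum.inl.injEq] at h
          subst h
          rcases h3 with rfl | rfl | rfl <;>
            simp [uedge, Subtype.ext_iff, Sym2.eq_swap]
    · simp only [cfun, Sum.elim_inr] at h
      split_ifs at h <;> simp at h
  · rintro (rfl | rfl | rfl)
    · exact cfun_uedge_neg i j k i v (Or.inl rfl) hv hiv
    · exact cfun_uedge_neg i j k j v (Or.inr (Or.inl rfl)) hv hjv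
    · exact cfun_uedge_neg i j k k v (Or.inr (Or.inr rfl)) hv hkv

lemma fiber_attr (u : Fin m) (e : Edge n m) :
    cfun i j k e = some (Sum.inr u) ↔
      e = Sum.inr (i, u) ∨ e = Sum.inr (j, u) ∨ e = Sum.inr (k, u) := by
  constructor
  · intro h
    rcases e with ⟨z, hz⟩ | ⟨x, u'⟩
    · induction z using Sym2.inductionOn with
      | hf x y =>
        simp only [cfun, Sum.elim_inl, Sym2.lift_mk] at h
        split_ifs at h <;> simp at h
    · simp only [cfun, Sum.elim_inr] at h
      split_ifs at h with hx
      · simp only [Option.some.injEq, Sum.inr.injEq] at h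
        subst h
        rcases hx with rfl | rfl | rfl <;> simp
  · rintro (rfl | rfl | rfl)
    · exact cfun_inr i j k i u (Or.inl rfl)
    · exact cfun_inr i j k j u (Or.inr (Or.inl rfl))
    · exact cfun_inr i j k k u (Or.inr (Or.inr rfl))

lemma uedge_swap (x y : Fin n) (h : x ≠ y) :
    uedge m x y h = uedge m y x h.symm := by
  simp [uedge, Subtype.ext_iff, Sym2.eq_swap]

include hij hjk hik in
/-- The event `i ≡ j ≡ k` is exactly the event that `g` is constant on each fiber of
`cfun`. -/
lemma event_iff (g : Edge n m → Bool) :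
    (Indist g i j ∧ Indist g j k ∧ Indist g i k) ↔
      ∀ l (e e' : Edge n m), cfun i j k e = some l → cfun i j k e' = some l →
        g e = g e' := by
  constructor
  · rintro ⟨H1, H2, H3⟩ l e e' he he'
    rcases l with y | u
    · by_cases hy : y = i
      · rw [hy] at he he'
        rw [fiber_tri i j k hij hjk hik] at he he'
        have e1 : g (uedge m i k hik) = g (uedge m j k hjk) :=
          H1.1 k (Ne.symm hik) (Ne.symm hjk)
        have e2 : g (uedge m i j hij) = g (uedge m i k hik) := by
          have h2 := H2.1 i hij hik
          rwa [uedge_swap j i hij.symm, uedge_swap k i hik.symm] at h2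
        rcases he with rfl | rfl | rfl <;> rcases he' with rfl | rfl | rfl <;>
          simp [e1, e2]
      · have hv : ¬ inS i j k y := by
          rcases cfun_inl_cases i j k e y he with h | h
          · exact absurd h hy
          · exact h
        have hiy : i ≠ y := fun h => hv (Or.inl h.symm)
        have hjy : j ≠ y := fun h => hv (Or.inr (Or.inl h.symm))
        have hky : k ≠ y := fun h => hv (Or.inr (Or.inr h.symm))
        rw [fiber_v i j k y hv hiy hjy hky] at he he'
        have e1 : g (uedge m i y hiy) = g (uedge m j y hjy) :=
          H1.1 y (Ne.symm hiy) (Ne.symm hjy)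
        have e2 : g (uedge m j y hjy) = g (uedge m k y hky) :=
          H2.1 y (Ne.symm hjy) (Ne.symm hky)
        rcases he with rfl | rfl | rfl <;> rcases he' with rfl | rfl | rfl <;>
          simp [e1, e2]
    · rw [fiber_attr i j k u] at he he'
      have e1 : g (Sum.inr (i, u)) = g (Sum.inr (j, u)) := H1.2 u
      have e2 : g (Sum.inr (j, u)) = g (Sum.inr (k, u)) := H2.2 u
      rcases he with rfl | rfl | rfl <;> rcases he' with rfl | rfl | rfl <;>
        simp [e1, e2]
  · intro H
    have key : ∀ (x x' : Fin n), inS i j k x → inS i j k x' →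
        ∀ (v : Fin n) (h : x ≠ v) (h' : x' ≠ v),
        g (uedge m x v h) = g (uedge m x' v h') := by
      intro x x' hx hx' v h h'
      by_cases hv : inS i j k v
      · exact H _ _ _ (cfun_uedge_pos i j k x v hx hv h) (cfun_uedge_pos i j k x' v hx' hv h')
      · exact H _ _ _ (cfun_uedge_neg i j k x v hx hv h) (cfun_uedge_neg i j k x' v hx' hv h')
    have keyr : ∀ (x x' : Fin n), inS i j k x → inS i j k x' → ∀ u : Fin m,
        g (Sum.inr (x, u)) = g (Sum.inr (x', u)) := by
      intro x x' hx hx' u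
      exact H _ _ _ (cfun_inr i j k x u hx) (cfun_inr i j k x' u hx')
    refine ⟨⟨fun v h1 h2 => ?_, fun u => ?_⟩,
      ⟨fun v h1 h2 => ?_, fun u => ?_⟩, ⟨fun v h1 h2 => ?_, fun u => ?_⟩⟩
    · exact key i j (Or.inl rfl) (Or.inr (Or.inl rfl)) v h1.symm h2.symm
    · exact keyr i j (Or.inl rfl) (Or.inr (Or.inl rfl)) u
    · exact key j k (Or.inr (Or.inl rfl)) (Or.inr (Or.inr rfl)) v h1.symm h2.symm
    · exact keyr j k (Or.inr (Or.inl rfl)) (Or.inr (Or.inr rfl)) u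
    · exact key i k (Or.inl rfl) (Or.inr (Or.inr rfl)) v h1.symm h2.symm
    · exact keyr i k (Or.inl rfl) (Or.inr (Or.inr rfl)) u

end Fibers

section Measure

variable (i j k : Fin n) (hij : i ≠ j) (hjk : j ≠ k) (hik : i ≠ k)

/-- The labels of nontrivial blocks. -/
abbrev Lab' (n m : ℕ) (j k : Fin n) : Type :=
  {l : Fin n ⊕ Fin m // l ≠ Sum.inl j ∧ l ≠ Sum.inl k}

/-- Per-coordinate constraint sets given the block values `b`. -/
def sset (i j k : Fin n) (b : Fin n ⊕ Fin m → Bool) (e : Edge n m) : Set Bool :=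
  (cfun i j k e).elim Set.univ (fun l => {b l})

/-- Extension of block values from nontrivial labels to all labels. -/
def extb (j k : Fin n) (a : Lab' n m j k → Bool) (l : Fin n ⊕ Fin m) : Bool :=
  if h : l ≠ Sum.inl j ∧ l ≠ Sum.inl k then a ⟨l, h⟩ else false

lemma extb_spec (a : Lab' n m j k → Bool) (t : Lab' n m j k) :
    extb j k a t.1 = a t := by
  rw [extb, dif_pos t.2]

/-- A representative edge in each nontrivial block. -/
def repE (i j k : Fin n) (hij : i ≠ j) : Lab' n m j k → Edge n m
  | ⟨Sum.inl v, _⟩ => if h : v = i then uedge m i j hij else uedge m i v (Ne.symm h)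
  | ⟨Sum.inr u, _⟩ => Sum.inr (i, u)

lemma cfun_repE (t : Lab' n m j k) :
    cfun i j k (repE i j k hij t) = some t.1 := by
  obtain ⟨l, hl1, hl2⟩ := t
  rcases l with v | u
  · by_cases h : v = i
    · subst v
      rw [repE, dif_pos rfl]
      exact cfun_uedge_pos i j k i j (Or.inl rfl) (Or.inr (Or.inl rfl)) hij
    · have hv : ¬ inS i j k v := by
        rintro (rfl | rfl | rfl)
        · exact h rfl
        · exact hl1 rfl
        · exact hl2 rfl
      rw [repE, dif_neg h]
      exact cfun_uedge_neg i j k i v (Or.inl rfl) hv (Ne.symm h)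
  · rw [repE, cfun_inr i j k i u (Or.inl rfl)]

include hij hjk hik in
lemma event_eq_iUnion :
    {g : Edge n m → Bool | Indist g i j ∧ Indist g j k ∧ Indist g i k} =
      ⋃ a : Lab' n m j k → Bool, Set.univ.pi (fun e => sset i j k (extb j k a) e) := by
  ext g
  simp only [Set.mem_setOf_eq, Set.mem_iUnion, Set.mem_pi, Set.mem_univ, forall_const]
  rw [event_iff i j k hij hjk hik g]
  constructor
  · intro H
    refine ⟨fun t => g (repE i j k hij t), fun e => ?_⟩
    cases hce : cfun i j k e with
    | none => simp [sset, hce]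
    | some l =>
      have hl1 : l ≠ Sum.inl j := by
        rintro rfl
        rcases cfun_inl_cases i j k e j hce with h | h
        · exact hij h.symm
        · exact h (Or.inr (Or.inl rfl))
      have hl2 : l ≠ Sum.inl k := by
        rintro rfl
        rcases cfun_inl_cases i j k e k hce with h | h
        · exact hik h.symm
        · exact h (Or.inr (Or.inr rfl))
      have hx : extb j k (fun t => g (repE i j k hij t)) l
          = g (repE i j k hij ⟨l, hl1, hl2⟩) := by
        rw [extb, dif_pos ⟨hl1, hl2⟩]
      simp only [sset, hce, Option.elim_some, Set.mem_singleton_iff, hx]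
      exact H l e _ hce (cfun_repE i j k hij ⟨l, hl1, hl2⟩)
  · rintro ⟨a, ha⟩ l e e' he he'
    have h1 := ha e
    have h2 := ha e'
    simp only [sset, he, he', Option.elim_some, Set.mem_singleton_iff] at h1 h2
    rw [h1, h2]

/-- The per-block weight. -/
def wgt (p q : ℝ) : (Fin n ⊕ Fin m) → Bool → ENNReal
  | Sum.inl _, β => ENNReal.ofReal (if β then p else 1 - p) ^ 3
  | Sum.inr _, β => ENNReal.ofReal (if β then q else 1 - q) ^ 3

include hij hjk hik in
lemma prod_factor (p q : ℝ) (hp0 : 0 ≤ p) (hp1 : p ≤ 1) (hq0 : 0 ≤ q) (hq1 : q ≤ 1)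
    (b : Fin n ⊕ Fin m → Bool) :
    (∏ e : Edge n m,
        Sum.elim (fun _ => bernM p) (fun _ => bernM q) e (sset i j k b e)) =
      ∏ t : Lab' n m j k, wgt p q t.1 (b t.1) := by
  set μe : Edge n m → Measure Bool := Sum.elim (fun _ => bernM p) (fun _ => bernM q) with hμe
  rw [← Finset.prod_fiberwise univ (cfun i j k) (fun e => μe e (sset i j k b e))]
  rw [Fintype.prod_option (fun o => ∏ e ∈ univ with cfun i j k e = o, μe e (sset i j k b e))]
  have hnone : (∏ e ∈ univ with cfun i j k e = none, μe e (sset i j k b e)) = 1 := by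
    refine Finset.prod_eq_one fun e he => ?_
    rw [Finset.mem_filter] at he
    have : sset i j k b e = Set.univ := by rw [sset, he.2, Option.elim_none]
    rw [this]
    rcases e with e | e
    · exact bernM_univ p hp0 hp1
    · exact bernM_univ q hq0 hq1
  rw [hnone, one_mul]
  rw [← Finset.prod_filter_mul_prod_filter_not univ
    (fun l : Fin n ⊕ Fin m => l ≠ Sum.inl j ∧ l ≠ Sum.inl k)
    (fun l => ∏ e ∈ univ with cfun i j k e = some l, μe e (sset i j k b e))]
  have htriv : (∏ l ∈ univ with ¬(l ≠ Sum.inl j ∧ l ≠ Sum.inl k),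
      ∏ e ∈ univ with cfun i j k e = some l, μe e (sset i j k b e)) = 1 := by
    refine Finset.prod_eq_one fun l hl => ?_
    rw [Finset.mem_filter] at hl
    refine Finset.prod_eq_one fun e he => ?_
    rw [Finset.mem_filter] at he
    exfalso
    have hl' : l = Sum.inl j ∨ l = Sum.inl k := by tauto
    rcases hl' with rfl | rfl
    · rcases cfun_inl_cases i j k e j he.2 with h | h
      · exact hij h.symm
      · exact h (Or.inr (Or.inl rfl))
    · rcases cfun_inl_cases i j k e k he.2 with h | h
      · exact hik h.symm
      · exact h (Or.inr (Or.inr rfl))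
  rw [htriv, mul_one]
  rw [Finset.prod_subtype (p := fun l : Fin n ⊕ Fin m =>
      l ≠ Sum.inl j ∧ l ≠ Sum.inl k) (univ.filter (fun l : Fin n ⊕ Fin m =>
      l ≠ Sum.inl j ∧ l ≠ Sum.inl k)) (fun x => by simp)
    (fun l => ∏ e ∈ univ with cfun i j k e = some l, μe e (sset i j k b e))]
  refine Finset.prod_congr rfl fun t _ => ?_
  obtain ⟨l, hl1, hl2⟩ := t
  have hfil : ∀ (A B C : Edge n m), A ≠ B → A ≠ C → B ≠ C →
      (∀ e : Edge n m, cfun i j k e = some l ↔ e = A ∨ e = B ∨ e = C) →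
      (univ.filter (fun e : Edge n m => cfun i j k e = some l)) = {A, B, C} := by
    intro A B C _ _ _ hiff
    ext e
    simp [hiff e, Finset.mem_insert]
  have hcard : ∀ (A B C : Edge n m), A ≠ B → A ≠ C → B ≠ C →
      ({A, B, C} : Finset (Edge n m)).card = 3 := by
    intro A B C h1 h2 h3
    rw [Finset.card_insert_of_notMem (by simp [h1, h2]),
      Finset.card_insert_of_notMem (by simp [h3]), Finset.card_singleton]
  rcases l with v | u
  · -- user block
    by_cases hv : i = v
    · subst hv
      have d1 : uedge m i j hij ≠ uedge m j k hjk := by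
        simp only [uedge, ne_eq, Sum.inl.injEq, Subtype.mk.injEq, Sym2.eq_iff]
        tauto
      have d2 : uedge m i j hij ≠ uedge m i k hik := by
        simp only [uedge, ne_eq, Sum.inl.injEq, Subtype.mk.injEq, Sym2.eq_iff]
        tauto
      have d3 : uedge m j k hjk ≠ uedge m i k hik := by
        simp only [uedge, ne_eq, Sum.inl.injEq, Subtype.mk.injEq, Sym2.eq_iff]
        tauto
      rw [hfil _ _ _ d1 d2 d3 (fiber_tri i j k hij hjk hik)]
      have hval : ∀ e ∈ ({uedge m i j hij, uedge m j k hjk, uedge m i k hik} :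
          Finset (Edge n m)), μe e (sset i j k b e) =
            ENNReal.ofReal (if b (Sum.inl i) then p else 1 - p) := by
        intro e he
        have hce : cfun i j k e = some (Sum.inl i) := by
          rw [fiber_tri i j k hij hjk hik e]
          simpa [Finset.mem_insert] using he
        have hss : sset i j k b e = {b (Sum.inl i)} := by
          rw [sset, hce, Option.elim_some]
        have hinl : ∃ z, e = Sum.inl z := by
          simp only [Finset.mem_insert, Finset.mem_singleton] at he
          rcases he with rfl | rfl | rfl <;> exact ⟨_, rfl⟩
        obtain ⟨z, rfl⟩ := hinl
        rw [hss, hμe, Sum.elim_inl, bernM_singleton]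
      rw [Finset.prod_congr rfl hval, Finset.prod_const, hcard _ _ _ d1 d2 d3]
      rfl
    · have hvS : ¬ inS i j k v := by
        rintro (rfl | rfl | rfl)
        · exact hv rfl
        · exact hl1 rfl
        · exact hl2 rfl
      have hiv : i ≠ v := fun h => hvS (Or.inl h.symm)
      have hjv : j ≠ v := fun h => hvS (Or.inr (Or.inl h.symm))
      have hkv : k ≠ v := fun h => hvS (Or.inr (Or.inr h.symm))
      have d1 : uedge m i v hiv ≠ uedge m j v hjv := by
        simp only [uedge, ne_eq, Sum.inl.injEq, Subtype.mk.injEq, Sym2.eq_iff]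
        tauto
      have d2 : uedge m i v hiv ≠ uedge m k v hkv := by
        simp only [uedge, ne_eq, Sum.inl.injEq, Subtype.mk.injEq, Sym2.eq_iff]
        tauto
      have d3 : uedge m j v hjv ≠ uedge m k v hkv := by
        simp only [uedge, ne_eq, Sum.inl.injEq, Subtype.mk.injEq, Sym2.eq_iff]
        tauto
      rw [hfil _ _ _ d1 d2 d3 (fiber_v i j k v hvS hiv hjv hkv)]
      have hval : ∀ e ∈ ({uedge m i v hiv, uedge m j v hjv, uedge m k v hkv} :
          Finset (Edge n m)), μe e (sset i j k b e) =
            ENNReal.ofReal (if b (Sum.inl v) then p else 1 - p) := by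
        intro e he
        have hce : cfun i j k e = some (Sum.inl v) := by
          rw [fiber_v i j k v hvS hiv hjv hkv e]
          simpa [Finset.mem_insert] using he
        have hss : sset i j k b e = {b (Sum.inl v)} := by
          rw [sset, hce, Option.elim_some]
        have hinl : ∃ z, e = Sum.inl z := by
          simp only [Finset.mem_insert, Finset.mem_singleton] at he
          rcases he with rfl | rfl | rfl <;> exact ⟨_, rfl⟩
        obtain ⟨z, rfl⟩ := hinl
        rw [hss, hμe, Sum.elim_inl, bernM_singleton]
      rw [Finset.prod_congr rfl hval, Finset.prod_const, hcard _ _ _ d1 d2 d3]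
      rfl
  · -- attribute block
    have d1 : (Sum.inr (i, u) : Edge n m) ≠ Sum.inr (j, u) := by simp [hij]
    have d2 : (Sum.inr (i, u) : Edge n m) ≠ Sum.inr (k, u) := by simp [hik]
    have d3 : (Sum.inr (j, u) : Edge n m) ≠ Sum.inr (k, u) := by simp [hjk]
    rw [hfil _ _ _ d1 d2 d3 (fiber_attr i j k u)]
    have hval : ∀ e ∈ ({Sum.inr (i, u), Sum.inr (j, u), Sum.inr (k, u)} :
        Finset (Edge n m)), μe e (sset i j k b e) =
          ENNReal.ofReal (if b (Sum.inr u) then q else 1 - q) := by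
      intro e he
      have hce : cfun i j k e = some (Sum.inr u) := by
        rw [fiber_attr i j k u e]
        simpa [Finset.mem_insert] using he
      have hss : sset i j k b e = {b (Sum.inr u)} := by
        rw [sset, hce, Option.elim_some]
      have hinr : ∃ z, e = Sum.inr z := by
        simp only [Finset.mem_insert, Finset.mem_singleton] at he
        rcases he with rfl | rfl | rfl <;> exact ⟨_, rfl⟩
      obtain ⟨z, rfl⟩ := hinr
      rw [hss, hμe, Sum.elim_inr, bernM_singleton]
    rw [Finset.prod_congr rfl hval, Finset.prod_const, hcard _ _ _ d1 d2 d3]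
    rfl

lemma sum_prod_wgt (p q : ℝ) :
    (∑ a : Lab' n m j k → Bool, ∏ t : Lab' n m j k, wgt p q t.1 (extb j k a t.1)) =
      ∏ t : Lab' n m j k, (wgt p q t.1 true + wgt p q t.1 false) := by
  have h1 : ∀ a : Lab' n m j k → Bool, ∀ t : Lab' n m j k,
      wgt (n := n) (m := m) p q t.1 (extb j k a t.1) = wgt p q t.1 (a t) := by
    intro a t
    rw [extb_spec]
  have h2 : (∑ a : Lab' n m j k → Bool, ∏ t : Lab' n m j k, wgt p q t.1 (a t)) =
      ∏ t : Lab' n m j k, (∑ β : Bool, wgt p q t.1 β) := by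
    rw [Finset.prod_univ_sum (fun _ : Lab' n m j k => (univ : Finset Bool))
      (fun (t : Lab' n m j k) (β : Bool) => wgt p q t.1 β)]
    rw [Fintype.piFinset_univ]
  calc (∑ a : Lab' n m j k → Bool, ∏ t : Lab' n m j k, wgt p q t.1 (extb j k a t.1))
      = ∑ a : Lab' n m j k → Bool, ∏ t : Lab' n m j k, wgt p q t.1 (a t) := by
        refine Finset.sum_congr rfl fun a _ => Finset.prod_congr rfl fun t _ => h1 a t
    _ = ∏ t : Lab' n m j k, (∑ β : Bool, wgt p q t.1 β) := h2
    _ = ∏ t : Lab' n m j k, (wgt p q t.1 true + wgt p q t.1 false) := by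
        refine Finset.prod_congr rfl fun t _ => ?_
        rw [Fintype.sum_bool]

include hjk in
lemma prod_wgt_sum (p q : ℝ) :
    (∏ t : Lab' n m j k, (wgt p q t.1 true + wgt p q t.1 false)) =
      (ENNReal.ofReal p ^ 3 + ENNReal.ofReal (1 - p) ^ 3) ^ (n - 2) *
        (ENNReal.ofReal q ^ 3 + ENNReal.ofReal (1 - q) ^ 3) ^ m := by
  set Cp : ENNReal := ENNReal.ofReal p ^ 3 + ENNReal.ofReal (1 - p) ^ 3 with hCp
  set Cq : ENNReal := ENNReal.ofReal q ^ 3 + ENNReal.ofReal (1 - q) ^ 3 with hCq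
  have hG : ∀ t : Lab' n m j k, wgt (n := n) (m := m) p q t.1 true + wgt p q t.1 false =
      Sum.elim (fun _ : Fin n => Cp) (fun _ : Fin m => Cq) t.1 := by
    rintro ⟨v | u, ht⟩ <;> simp [wgt, hCp, hCq]
  rw [Finset.prod_congr rfl fun t _ => hG t]
  rw [← Finset.prod_subtype (p := fun l : Fin n ⊕ Fin m =>
      l ≠ Sum.inl j ∧ l ≠ Sum.inl k) (univ.filter (fun l : Fin n ⊕ Fin m =>
      l ≠ Sum.inl j ∧ l ≠ Sum.inl k)) (fun x => by simp)
    (fun l => Sum.elim (fun _ : Fin n => Cp) (fun _ : Fin m => Cq) l)]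
  rw [Finset.prod_filter]
  rw [Fintype.prod_sum_type]
  have hr : (∏ u : Fin m, if (Sum.inr u : Fin n ⊕ Fin m) ≠ Sum.inl j ∧
      (Sum.inr u : Fin n ⊕ Fin m) ≠ Sum.inl k then
        Sum.elim (fun _ : Fin n => Cp) (fun _ : Fin m => Cq) (Sum.inr u) else 1) = Cq ^ m := by
    have : ∀ u : Fin m, (if (Sum.inr u : Fin n ⊕ Fin m) ≠ Sum.inl j ∧
        (Sum.inr u : Fin n ⊕ Fin m) ≠ Sum.inl k then
          Sum.elim (fun _ : Fin n => Cp) (fun _ : Fin m => Cq) (Sum.inr u) else 1) = Cq := by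
      intro u
      rw [if_pos (by simp)]
      rfl
    rw [Finset.prod_congr rfl fun u _ => this u, Finset.prod_const, Finset.card_univ,
      Fintype.card_fin]
  have hl : (∏ v : Fin n, if (Sum.inl v : Fin n ⊕ Fin m) ≠ Sum.inl j ∧
      (Sum.inl v : Fin n ⊕ Fin m) ≠ Sum.inl k then
        Sum.elim (fun _ : Fin n => Cp) (fun _ : Fin m => Cq) (Sum.inl v) else 1) =
        Cp ^ (n - 2) := by
    have hiff : ∀ v : Fin n, ((Sum.inl v : Fin n ⊕ Fin m) ≠ Sum.inl j ∧
        (Sum.inl v : Fin n ⊕ Fin m) ≠ Sum.inl k) ↔ (v ≠ j ∧ v ≠ k) := by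
      intro v; simp
    have : ∀ v : Fin n, (if (Sum.inl v : Fin n ⊕ Fin m) ≠ Sum.inl j ∧
        (Sum.inl v : Fin n ⊕ Fin m) ≠ Sum.inl k then
          Sum.elim (fun _ : Fin n => Cp) (fun _ : Fin m => Cq) (Sum.inl v) else 1) =
        (if v ≠ j ∧ v ≠ k then Cp else 1) := by
      intro v
      by_cases h : v ≠ j ∧ v ≠ k
      · rw [if_pos ((hiff v).mpr h), if_pos h]
        rfl
      · rw [if_neg (fun hh => h ((hiff v).mp hh)), if_neg h]
    rw [Finset.prod_congr rfl fun v _ => this v]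
    rw [Finset.prod_ite, Finset.prod_const, Finset.prod_const, one_pow, mul_one]
    congr 1
    have hset : univ.filter (fun v : Fin n => v ≠ j ∧ v ≠ k) =
        (univ : Finset (Fin n)) \ {j, k} := by
      ext v
      simp [not_or]
    rw [hset, Finset.card_sdiff_of_subset (Finset.subset_univ _), Finset.card_univ, Fintype.card_fin,
      Finset.card_insert_of_notMem (by simp [hjk]), Finset.card_singleton]
  rw [hl, hr]

end Measure

end ProbTriple


/-- **Probability that three user vertices are pairwise indistinguishable** in the
intersection graph:
`P(i ≡ j ≡ k) = (1 − 3p₁₁ + 3p₁₁²)^{n−2} (1 − 3q₁₁ + 3q₁₁²)^m`. -/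
theorem prob_indistinguishable_triple
    (n m : ℕ) (p11 q11 : ℝ)
    (hp : p11 ∈ Set.Icc (0 : ℝ) 1) (hq : q11 ∈ Set.Icc (0 : ℝ) 1)
    (i j k : Fin n) (hij : i ≠ j) (hjk : j ≠ k) (hik : i ≠ k) :
    interM n m p11 q11
        {g : Edge n m → Bool | Indist g i j ∧ Indist g j k ∧ Indist g i k} =
      ENNReal.ofReal
        ((1 - 3 * p11 + 3 * p11 ^ 2) ^ (n - 2) * (1 - 3 * q11 + 3 * q11 ^ 2) ^ m) := by
  obtain ⟨hp0, hp1⟩ := hp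
  obtain ⟨hq0, hq1⟩ := hq
  haveI hPM : ∀ e : Edge n m, IsProbabilityMeasure
      ((fun e : Edge n m => Sum.elim (fun _ => bernM p11) (fun _ => bernM q11) e) e) := by
    rintro (e | e)
    · exact ProbTriple.bernM_prob p11 hp0 hp1
    · exact ProbTriple.bernM_prob q11 hq0 hq1
  haveI hSF : ∀ e : Edge n m, SigmaFinite
      ((fun e : Edge n m => Sum.elim (fun _ => bernM p11) (fun _ => bernM q11) e) e) :=
    fun e => inferInstance
  have hmeas : ∀ a : ProbTriple.Lab' n m j k → Bool, MeasurableSet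
      (Set.univ.pi fun e => ProbTriple.sset i j k (ProbTriple.extb j k a) e) :=
    fun a => MeasurableSet.univ_pi (fun e => MeasurableSet.of_discrete)
  have hdisj : Pairwise (Function.onFun Disjoint
      (fun a : ProbTriple.Lab' n m j k → Bool =>
        Set.univ.pi fun e => ProbTriple.sset i j k (ProbTriple.extb j k a) e)) := by
    intro a a' hne
    obtain ⟨t, ht⟩ := Function.ne_iff.mp hne
    rw [Function.onFun, Set.disjoint_left]
    intro g hg hg'
    have h1 := Set.mem_univ_pi.mp hg (ProbTriple.repE i j k hij t)
    have h2 := Set.mem_univ_pi.mp hg' (ProbTriple.repE i j k hij t)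
    simp only [ProbTriple.sset, ProbTriple.cfun_repE i j k hij t, Option.elim_some,
      Set.mem_singleton_iff, ProbTriple.extb_spec] at h1 h2
    exact ht (h1.symm.trans h2)
  rw [ProbTriple.event_eq_iUnion i j k hij hjk hik, measure_iUnion hdisj hmeas, tsum_fintype]
  have hterm : ∀ a : ProbTriple.Lab' n m j k → Bool,
      interM n m p11 q11
          (Set.univ.pi fun e => ProbTriple.sset i j k (ProbTriple.extb j k a) e) =
        ∏ t : ProbTriple.Lab' n m j k,
          ProbTriple.wgt p11 q11 t.1 (ProbTriple.extb j k a t.1) := by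
    intro a
    rw [interM, Measure.pi_pi]
    exact ProbTriple.prod_factor i j k hij hjk hik p11 q11 hp0 hp1 hq0 hq1 _
  rw [Finset.sum_congr rfl (fun a _ => hterm a)]
  rw [ProbTriple.sum_prod_wgt j k p11 q11, ProbTriple.prod_wgt_sum j k hjk p11 q11]
  have h3p : (0 : ℝ) ≤ 1 - 3 * p11 + 3 * p11 ^ 2 := by nlinarith [sq_nonneg (2 * p11 - 1)]
  have h3q : (0 : ℝ) ≤ 1 - 3 * q11 + 3 * q11 ^ 2 := by nlinarith [sq_nonneg (2 * q11 - 1)]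
  have e1 : ENNReal.ofReal p11 ^ 3 + ENNReal.ofReal (1 - p11) ^ 3 =
      ENNReal.ofReal (1 - 3 * p11 + 3 * p11 ^ 2) := by
    rw [← ENNReal.ofReal_pow hp0, ← ENNReal.ofReal_pow (by linarith),
      ← ENNReal.ofReal_add (pow_nonneg hp0 3) (pow_nonneg (by linarith) 3)]
    congr 1
    ring
  have e2 : ENNReal.ofReal q11 ^ 3 + ENNReal.ofReal (1 - q11) ^ 3 =
      ENNReal.ofReal (1 - 3 * q11 + 3 * q11 ^ 2) := by
    rw [← ENNReal.ofReal_pow hq0, ← ENNReal.ofReal_pow (by linarith),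
      ← ENNReal.ofReal_add (pow_nonneg hq0 3) (pow_nonneg (by linarith) 3)]
    congr 1
    ring
  rw [e1, e2, ← ENNReal.ofReal_pow h3p, ← ENNReal.ofReal_pow h3q,
    ← ENNReal.ofReal_mul (pow_nonneg h3p _)]

end
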